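/- Let M be positive semidefinite and Y ∈ ℝ^{n×p} with all eigenvalues of YᵀMY in [5/6, 7/6]. Define A(Y) := Y((3/2)I_p − (1/2)YᵀMY) and R(Y) := Y(YᵀMY)^{-1/2}. Then ‖A(Y) − R(Y)‖_F ≤ (3/4)·‖Y‖_F·‖YᵀMY − I_p‖₂². -/

import Mathlib

open Matrix

attribute [local instance] Matrix.frobeniusNormedAddCommGroup Matrix.frobeniusNormedSpace

/-- The positive semidefinite square root of a positive semidefinite matrix
(the definition removed from Mathlib, restored with its old meaning). -/
noncomputable def Matrix.PosSemidef.sqrt {𝕜 : Type*} [RCLike 𝕜] [PartialOrder 𝕜] {n : Type*} [Fintype n]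
    [DecidableEq n] {A : Matrix n n 𝕜} (hA : A.PosSemidef) : Matrix n n 𝕜 :=
  hA.1.eigenvectorUnitary.1 * diagonal ((↑) ∘ (Real.sqrt ∘ hA.1.eigenvalues)) *
    (star hA.1.eigenvectorUnitary : Matrix n n 𝕜)

/-- The spectral (operator 2-) norm of a real square matrix. -/
noncomputable def specNorm {p : ℕ} (A : Matrix (Fin p) (Fin p) ℝ) : ℝ :=
  ‖(Matrix.toEuclideanCLM (𝕜 := ℝ) A : EuclideanSpace ℝ (Fin p) →L[ℝ] EuclideanSpace ℝ (Fin p))‖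

/-!
Write `S = YᵀMY`. Both `(3/2)I − S/2` and `S^{-1/2}` are functions of `S`, so
`A(Y) − R(Y) = Y f(S)` with `f x = 3/2 − x/2 − x^{-1/2}`, and
`‖Y f(S)‖_F ≤ ‖Y‖_F ‖f(S)‖₂ = ‖Y‖_F maxᵢ |f λᵢ|`. With `x = s²` one has
`f x = −(s − 1)²(s + 2)/(2s)`, which is at most `(3/4)(x − 1)²` in absolute value as soon as
`x ≥ 1/2`, and `|λᵢ − 1| ≤ ‖S − I‖₂`.
-/

lemma specNorm_transpose {p : ℕ} (A : Matrix (Fin p) (Fin p) ℝ) : specNorm Aᵀ = specNorm A :=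
  l2_opNorm_conjTranspose A

-- `‖d‖` is the sup norm of `d`.
lemma specNorm_diagonal {p : ℕ} (d : Fin p → ℝ) : specNorm (diagonal d) = ‖d‖ :=
  l2_opNorm_diagonal d

lemma specNorm_unitary_conj {p : ℕ} {U : Matrix (Fin p) (Fin p) ℝ} (hU : U ∈ unitary _)
    (A : Matrix (Fin p) (Fin p) ℝ) : specNorm (U * A * star U) = specNorm A := by
  have hT := Unitary.map_mem (toEuclideanCLM (n := Fin p) (𝕜 := ℝ)) hU
  rw [specNorm, map_mul, map_mul, map_star, CStarRing.norm_mul_mem_unitary _ (Unitary.star_mem hT),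
    CStarRing.norm_mem_unitary_mul _ hT, specNorm]

namespace Matrix

section Frobenius

variable {m k α : Type*} [Fintype m] [Fintype k] [NormedAddCommGroup α]

lemma frobenius_norm_sq_eq_sum_norm_row (A : Matrix m k α) :
    ‖A‖ ^ 2 = ∑ i, ‖WithLp.toLp 2 (A i)‖ ^ 2 :=
  PiLp.norm_sq_eq_of_L2 _ (WithLp.toLp 2 fun i => WithLp.toLp 2 (A i))

lemma frobenius_norm_mul_le_mul_specNorm {p : ℕ} (Y : Matrix m (Fin p) ℝ)
    (B : Matrix (Fin p) (Fin p) ℝ) : ‖Y * B‖ ≤ ‖Y‖ * specNorm B := by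
  have hrow (i : m) : ‖WithLp.toLp 2 ((Y * B) i)‖ ≤ specNorm B * ‖WithLp.toLp 2 (Y i)‖ := by
    have h := (toEuclideanCLM (𝕜 := ℝ) Bᵀ).le_opNorm (WithLp.toLp 2 (Y i))
    rwa [toEuclideanCLM_toLp, mulVec_transpose, ← specNorm, specNorm_transpose] at h
  refine (sq_le_sq₀ (norm_nonneg _) (mul_nonneg (norm_nonneg _) (norm_nonneg _))).mp ?_
  rw [mul_pow, frobenius_norm_sq_eq_sum_norm_row, frobenius_norm_sq_eq_sum_norm_row,
    Finset.sum_mul]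
  refine Finset.sum_le_sum fun i _ => ?_
  rw [mul_comm, ← mul_pow]
  exact pow_le_pow_left₀ (norm_nonneg _) (hrow i) 2

end Frobenius

namespace IsHermitian

variable {p : ℕ} {A : Matrix (Fin p) (Fin p) ℝ}

lemma specNorm_cfc (hA : A.IsHermitian) (f : ℝ → ℝ) :
    specNorm (cfc f A) = ‖f ∘ hA.eigenvalues‖ := by
  rw [hA.cfc_eq]
  exact (specNorm_unitary_conj (SetLike.coe_mem _) _).trans (specNorm_diagonal _)

lemma specNorm_cfc_le (hA : A.IsHermitian) {f : ℝ → ℝ} {c : ℝ} (hc : 0 ≤ c)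
    (hf : ∀ i, |f (hA.eigenvalues i)| ≤ c) : specNorm (cfc f A) ≤ c :=
  hA.specNorm_cfc f ▸ (pi_norm_le_iff_of_nonneg hc).2 hf

lemma abs_eigenvalues_sub_one_le (hA : A.IsHermitian) (i : Fin p) :
    |hA.eigenvalues i - 1| ≤ specNorm (A - 1) := by
  have hA1 : cfc (fun x : ℝ => x - 1) A = A - 1 := by
    rw [cfc_sub (fun x : ℝ => x) (fun _ => 1) A, cfc_id' ℝ A, cfc_const_one ℝ A]
  rw [← hA1, hA.specNorm_cfc]
  exact norm_le_pi_norm (fun j => hA.eigenvalues j - 1) i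

end IsHermitian

variable {𝕜 : Type*} [RCLike 𝕜] {n : Type*} [Fintype n] [DecidableEq n] {A : Matrix n n 𝕜}

lemma IsHermitian.cfc_three_halves_sub_half_sub (hA : A.IsHermitian) (g : ℝ → ℝ) :
    cfc (fun x => 3 / 2 - x / 2 - g x) A = (3 / 2 : ℝ) • 1 - (1 / 2 : ℝ) • A - cfc g A := by
  have hfin := A.finite_real_spectrum
  have hhalf : (fun x : ℝ => 3 / 2 - x / 2) = fun x => 3 / 2 - (1 / 2) * x := by
    ext x
    ring
  rw [cfc_sub _ g A (hfin.continuousOn _) (hfin.continuousOn _), hhalf,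
    cfc_sub (fun _ => 3 / 2) (fun x => (1 / 2) * x) A, cfc_const (3 / 2 : ℝ) A,
    cfc_const_mul_id (1 / 2 : ℝ) A, Algebra.algebraMap_eq_smul_one]

variable [PartialOrder 𝕜]

lemma PosSemidef.sqrt_eq_cfc (hA : A.PosSemidef) : hA.sqrt = cfc Real.sqrt A := by
  rw [hA.1.cfc_eq]
  rfl

lemma PosSemidef.inv_sqrt_eq_cfc (hA : A.PosSemidef) (hpos : ∀ x ∈ spectrum ℝ A, 0 < x) :
    (hA.sqrt)⁻¹ = cfc (fun x => (√x)⁻¹) A := by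
  rw [hA.sqrt_eq_cfc, nonsing_inv_eq_ringInverse,
    cfc_inv Real.sqrt A (fun x hx => (Real.sqrt_pos.2 (hpos x hx)).ne') (ha := hA.1.isSelfAdjoint)]

end Matrix

lemma abs_three_halves_sub_half_sub_inv_sqrt_le {x : ℝ} (hx : 1 / 2 ≤ x) :
    |3 / 2 - x / 2 - (√x)⁻¹| ≤ 3 / 4 * (x - 1) ^ 2 := by
  obtain ⟨s, hs, rfl⟩ : ∃ s : ℝ, 0 < s ∧ x = s ^ 2 :=
    ⟨√x, by positivity, (Real.sq_sqrt (by linarith)).symm⟩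
  rw [Real.sqrt_sq hs.le]
  have hsplit : 3 / 2 - s ^ 2 / 2 - s⁻¹ = -((s - 1) ^ 2 * (s + 2) / (2 * s)) := by
    field_simp
    ring
  have hcubic : 0 ≤ 3 * s ^ 3 + 6 * s ^ 2 + s - 4 := by nlinarith
  rw [hsplit, abs_neg, abs_of_nonneg (by positivity), div_le_iff₀ (by positivity)]
  nlinarith [mul_nonneg (sq_nonneg (s - 1)) hcubic]

theorem stmt_4_general {n p : ℕ} (M : Matrix (Fin n) (Fin n) ℝ)
    (Y : Matrix (Fin n) (Fin p) ℝ) (hS : (Yᵀ * M * Y).PosSemidef)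
    (heig : ∀ i, hS.1.eigenvalues i ∈ Set.Icc (5 / 6 : ℝ) (7 / 6)) :
    ‖Y * ((3 / 2 : ℝ) • (1 : Matrix (Fin p) (Fin p) ℝ) - (1 / 2 : ℝ) • (Yᵀ * M * Y))
        - Y * (hS.sqrt)⁻¹‖
      ≤ (3 / 4) * ‖Y‖ * specNorm (Yᵀ * M * Y - 1) ^ 2 := by
  set S := Yᵀ * M * Y
  have hspec : ∀ x ∈ spectrum ℝ S, 0 < x := by
    rw [hS.1.spectrum_real_eq_range_eigenvalues]
    rintro _ ⟨i, rfl⟩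
    exact lt_of_lt_of_le (by norm_num) (heig i).1
  rw [← Matrix.mul_sub, hS.inv_sqrt_eq_cfc hspec, ← hS.1.cfc_three_halves_sub_half_sub]
  calc _ ≤ ‖Y‖ * specNorm (cfc (fun x => 3 / 2 - x / 2 - (√x)⁻¹) S) :=
        frobenius_norm_mul_le_mul_specNorm Y _
    _ ≤ ‖Y‖ * (3 / 4 * specNorm (S - 1) ^ 2) := by
        gcongr
        refine hS.1.specNorm_cfc_le (by positivity) fun i => ?_
        calc _ ≤ 3 / 4 * (hS.1.eigenvalues i - 1) ^ 2 :=
              abs_three_halves_sub_half_sub_inv_sqrt_le (by linarith [(heig i).1])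
          _ ≤ 3 / 4 * specNorm (S - 1) ^ 2 := by
              rw [← sq_abs]
              gcongr
              exact hS.1.abs_eigenvalues_sub_one_le i
    _ = _ := by ring

/-- With `A(Y) := Y((3/2)I − (1/2)YᵀMY)` and `R(Y) := Y(YᵀMY)^{-1/2}`, if all eigenvalues
of `YᵀMY` lie in `[5/6, 7/6]` then `‖A(Y) − R(Y)‖_F ≤ (3/4)‖Y‖_F ‖YᵀMY − I‖₂²`. -/
theorem stmt_4 {n p : ℕ} (M : Matrix (Fin n) (Fin n) ℝ) (hM : M.PosSemidef)
    (Y : Matrix (Fin n) (Fin p) ℝ) (hS : (Yᵀ * M * Y).PosSemidef)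
    (heig : ∀ i, hS.1.eigenvalues i ∈ Set.Icc (5 / 6 : ℝ) (7 / 6)) :
    ‖Y * ((3 / 2 : ℝ) • (1 : Matrix (Fin p) (Fin p) ℝ) - (1 / 2 : ℝ) • (Yᵀ * M * Y))
        - Y * (hS.sqrt)⁻¹‖
      ≤ (3 / 4) * ‖Y‖ * specNorm (Yᵀ * M * Y - 1) ^ 2 :=
  stmt_4_general M Y hS heig
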